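/- Let n ≥ 1, q ≥ 2 and 1 ≤ d ≤ n be integers, and let g(z) = Σ_{i=0}^{n} g_i K_i^{(n,q)}(z) be a real polynomial satisfying g_0 > 0, g_i ≥ 0 for i = 1,2,…,n, g(0) > 0, and g(i) ≤ 0 for every integer i with d ≤ i ≤ n. Then every code C ⊆ H(n,q) with minimum Hamming distance at least d satisfies |C| ≤ g(0)/g_0. -/

import Mathlib

/-- Generalized binomial coefficient `C(x,j) = x(x-1)⋯(x-j+1)/j!` as a function of a real `x`. -/
noncomputable def genChoose (x : ℝ) (j : ℕ) : ℝ :=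
  (descPochhammer ℝ j).eval x / (Nat.factorial j : ℝ)

/-- The `q`-ary Krawtchouk polynomial `K_i^{(n,q)}(x)`. -/
noncomputable def kraw (n q i : ℕ) (x : ℝ) : ℝ :=
  ∑ j ∈ Finset.range (i + 1),
    (-1 : ℝ) ^ j * ((q : ℝ) - 1) ^ (i - j) * genChoose x j * genChoose ((n : ℝ) - x) (i - j)

/-
Delsarte's linear programming bound. For a primitive additive character `ψ` of `ZMod q`,
comparing coefficients in `∏ⱼ ∑ₐ ψ(a wⱼ) X^[a ≠ 0] = (1 + (q-1)X)^(n - |w|) (1 - X)^|w|` gives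
`K_i(|w|) = ∑_{|z| = i} ψ(z ⬝ w)`. Hence the distance distribution of any code `C` has a
nonnegative Krawtchouk transform: `∑_{x,y ∈ C} K_i(d(x,y)) = ∑_{|z| = i} |∑_{x ∈ C} ψ(z ⬝ x)|² ≥ 0`.
Expanding `g` in Krawtchouk polynomials, `∑_{x,y ∈ C} g(d(x,y))` is therefore at least `g₀ |C|²`
(keep only the term `K₀ = 1`), while it is at most `|C| g(0)` because every off-diagonal term has
`d ≤ d(x,y) ≤ n`, where `g ≤ 0`.
-/

open Finset Polynomial Matrix ComplexConjugate

lemma genChoose_natCast (m j : ℕ) : genChoose m j = m.choose j := by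
  rw [genChoose, descPochhammer_eval_eq_descFactorial, Nat.descFactorial_eq_factorial_mul_choose]
  push_cast
  field_simp

lemma kraw_natCast {n w : ℕ} (q i : ℕ) (hw : w ≤ n) :
    kraw n q i w = ∑ j ∈ range (i + 1),
      (-1) ^ j * ((q : ℝ) - 1) ^ (i - j) * w.choose j * (n - w).choose (i - j) := by
  simp only [kraw, ← Nat.cast_sub hw, genChoose_natCast]

lemma kraw_zero (n q : ℕ) (x : ℝ) : kraw n q 0 x = 1 := by
  simp [kraw, genChoose]

lemma coeff_one_add_C_mul_X_pow {R : Type*} [CommSemiring R] (c : R) (m k : ℕ) :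
    ((1 + C c * X) ^ m).coeff k = m.choose k * c ^ k := by
  rw [add_comm, add_pow, finsetSum_coeff]
  simp_rw [one_pow, mul_one, mul_pow, ← C_pow, ← Nat.cast_comm, ← C_eq_natCast, ← mul_assoc,
    ← C_mul, coeff_C_mul_X_pow]
  rw [sum_ite_eq]
  split_ifs with hk
  · ring
  · rw [Nat.choose_eq_zero_of_lt (by simpa using hk), Nat.cast_zero, zero_mul]

lemma kraw_natCast_eq_coeff {n w : ℕ} (q i : ℕ) (hw : w ≤ n) :
    kraw n q i w = ((1 + C ((q : ℝ) - 1) * X) ^ (n - w) * (1 - X) ^ w).coeff i := by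
  rw [show (1 - X : ℝ[X]) = 1 + C (-1) * X by simp [sub_eq_add_neg], coeff_mul,
    Nat.sum_antidiagonal_eq_sum_range_succ_mk, kraw_natCast q i hw, ← sum_range_reflect]
  refine sum_congr rfl fun j hj => ?_
  have hj : j ≤ i := Nat.lt_succ_iff.mp (mem_range.mp hj)
  simp only [coeff_one_add_C_mul_X_pow, add_tsub_cancel_right, Nat.sub_sub_self hj]
  ring

lemma AddChar.map_sum_eq_prod {A M ι : Type*} [AddCommMonoid A] [CommMonoid M] (ψ : AddChar A M)
    (s : Finset ι) (f : ι → A) : ψ (∑ j ∈ s, f j) = ∏ j ∈ s, ψ (f j) :=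
  map_prod ψ.toMonoidHom (fun j => Multiplicative.ofAdd (f j)) s

section
variable {ι : Type*} [Fintype ι] [DecidableEq ι] {q : ℕ} [NeZero q] {ψ : AddChar (ZMod q) ℂ}

lemma sum_addChar_mul_C_mul_X_pow (hψ : ψ.IsPrimitive) (b : ZMod q) :
    ∑ a : ZMod q, C (ψ (a * b)) * X ^ (if a = 0 then 0 else 1)
      = if b = 0 then 1 + C ((q : ℂ) - 1) * X else 1 - X := by
  have hsummand : ∀ a : ZMod q, C (ψ (a * b)) * X ^ (if a = 0 then 0 else 1)
      = C (ψ (a * b)) * X + if a = 0 then 1 - X else 0 := by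
    intro a
    split_ifs with ha <;> simp [ha]
  simp only [sum_congr rfl fun a _ => hsummand a, sum_add_distrib, ← sum_mul, ← map_sum,
    AddChar.sum_mulShift b hψ, sum_ite_eq', mem_univ, if_true, ZMod.card]
  split_ifs <;> simp [map_natCast]; ring

lemma sum_addChar_dotProduct_mul_X_pow_hammingNorm (hψ : ψ.IsPrimitive) (w : ι → ZMod q) :
    ∑ z : ι → ZMod q, C (ψ (z ⬝ᵥ w)) * X ^ hammingNorm z
      = (1 + C ((q : ℂ) - 1) * X) ^ (Fintype.card ι - hammingNorm w) * (1 - X) ^ hammingNorm w := by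
  have hfactor : ∀ z : ι → ZMod q, C (ψ (z ⬝ᵥ w)) * X ^ hammingNorm z
      = ∏ j, C (ψ (z j * w j)) * X ^ (if z j = 0 then 0 else 1) := by
    intro z
    rw [prod_mul_distrib, prod_pow_eq_pow_sum, hammingNorm, card_filter, dotProduct,
      AddChar.map_sum_eq_prod, map_prod]
    simp only [ite_not]
  have hcard : #{j | w j = 0} = Fintype.card ι - hammingNorm w := by
    have := card_filter_add_card_filter_not (s := univ) (p := fun j => w j = 0)
    rw [card_univ] at this
    simp only [hammingNorm, ne_eq]
    omega
  simp only [hfactor]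
  rw [← Fintype.prod_sum fun j a => C (ψ (a * w j)) * X ^ (if a = 0 then 0 else 1)]
  simp only [sum_addChar_mul_C_mul_X_pow hψ, prod_ite, prod_const, hcard, hammingNorm]

theorem kraw_hammingNorm_eq_sum_addChar (hψ : ψ.IsPrimitive) (w : ι → ZMod q) (i : ℕ) :
    (kraw (Fintype.card ι) q i (hammingNorm w) : ℂ)
      = ∑ z : ι → ZMod q with hammingNorm z = i, ψ (z ⬝ᵥ w) := by
  rw [kraw_natCast_eq_coeff q i hammingNorm_le_card_fintype, ← Complex.ofRealHom_eq_coe,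
    ← coeff_map]
  simp only [Polynomial.map_mul, Polynomial.map_pow, Polynomial.map_add, Polynomial.map_sub,
    Polynomial.map_one, Polynomial.map_C, Polynomial.map_X, Complex.ofRealHom_eq_coe]
  push_cast
  rw [← sum_addChar_dotProduct_mul_X_pow_hammingNorm hψ, finsetSum_coeff, sum_filter]
  simp only [coeff_C_mul_X_pow, eq_comm]

theorem sum_sum_kraw_hammingDist_eq_sum_norm_sq (hψ : ψ.IsPrimitive)
    (s : Finset (ι → ZMod q)) (i : ℕ) :
    ∑ x ∈ s, ∑ y ∈ s, kraw (Fintype.card ι) q i (hammingDist x y)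
      = ∑ z : ι → ZMod q with hammingNorm z = i, ‖∑ x ∈ s, ψ (z ⬝ᵥ x)‖ ^ 2 := by
  have hsub : ∀ z x y : ι → ZMod q, ψ (z ⬝ᵥ (x - y)) = ψ (z ⬝ᵥ x) * conj (ψ (z ⬝ᵥ y)) := by
    intro z x y
    rw [dotProduct_sub, AddChar.map_sub_eq_div, div_eq_mul_inv, AddChar.inv_apply_eq_conj]
  apply Complex.ofReal_injective
  push_cast
  simp only [hammingDist_eq_hammingNorm, neg_add_eq_sub, kraw_hammingNorm_eq_sum_addChar hψ, hsub,
    ← Complex.conj_mul', map_sum, sum_mul_sum]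
  rw [sum_congr rfl fun x _ => sum_comm, sum_comm]
  simp only [mul_comm]

end

theorem sum_sum_kraw_hammingDist_nonneg {ι α : Type*} [Fintype ι] [DecidableEq ι] [Fintype α]
    [DecidableEq α] [Nonempty α]
    (s : Finset (ι → α)) (i : ℕ) :
    0 ≤ ∑ x ∈ s, ∑ y ∈ s, kraw (Fintype.card ι) (Fintype.card α) i (hammingDist x y) := by
  let e : α ≃ ZMod (Fintype.card α) := Fintype.equivOfCardEq (ZMod.card _).symm
  let E := Equiv.piCongrRight fun _ : ι => e
  have hdist : ∀ x y : ι → α, hammingDist (E x) (E y) = hammingDist x y :=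
    fun x y => hammingDist_comp (fun _ => e) fun _ => e.injective
  have h := sum_sum_kraw_hammingDist_eq_sum_norm_sq (ZMod.isPrimitive_stdAddChar _)
    (s.map E.toEmbedding) i
  simp only [sum_map, Equiv.coe_toEmbedding, hdist] at h
  rw [h]
  positivity

lemma sum_sum_le_card_mul {α : Type*} (s : Finset α) (f : α → α → ℝ) (c : ℝ)
    (hdiag : ∀ x ∈ s, f x x ≤ c) (hoff : ∀ x ∈ s, ∀ y ∈ s, x ≠ y → f x y ≤ 0) :
    ∑ x ∈ s, ∑ y ∈ s, f x y ≤ #s * c := by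
  classical
  rw [← nsmul_eq_mul, ← sum_const]
  refine sum_le_sum fun x hx => ?_
  rw [← add_sum_erase s _ hx]
  have := sum_nonpos fun y hy => hoff x hx y (mem_of_mem_erase hy) (ne_of_mem_erase hy).symm
  linarith [hdiag x hx]

theorem stmt9_general (n q d : ℕ) (hq : 2 ≤ q)
    (G : ℕ → ℝ)
    (hG0 : 0 < G 0) (hGi : ∀ i : ℕ, 1 ≤ i → i ≤ n → 0 ≤ G i)
    (hg0 : 0 < ∑ i ∈ Finset.range (n + 1), G i * kraw n q i 0)
    (hgi : ∀ i : ℕ, d ≤ i → i ≤ n →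
      (∑ l ∈ Finset.range (n + 1), G l * kraw n q l (i : ℝ)) ≤ 0)
    (C : Finset (Fin n → Fin q))
    (hC : ∀ x ∈ C, ∀ y ∈ C, x ≠ y → d ≤ hammingDist x y) :
    (C.card : ℝ) ≤ (∑ i ∈ Finset.range (n + 1), G i * kraw n q i 0) / G 0 := by
  have : Nonempty (Fin q) := ⟨⟨0, by omega⟩⟩
  set g : ℝ → ℝ := fun z => ∑ l ∈ range (n + 1), G l * kraw n q l z with hg
  have hG : ∀ l ∈ range (n + 1), 0 ≤ G l := fun l hl =>
    l.eq_zero_or_pos.elim (fun h => h ▸ hG0.le) fun h =>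
      hGi l h (Nat.lt_succ_iff.1 (mem_range.1 hl))
  have hS (l : ℕ) : 0 ≤ ∑ x ∈ C, ∑ y ∈ C, kraw n q l (hammingDist x y) := by
    simpa using sum_sum_kraw_hammingDist_nonneg C l
  have hlow : G 0 * #C ^ 2 ≤ ∑ x ∈ C, ∑ y ∈ C, g (hammingDist x y) :=
    calc G 0 * #C ^ 2 = G 0 * ∑ x ∈ C, ∑ y ∈ C, kraw n q 0 (hammingDist x y) := by
          simp [kraw_zero, sq]
      _ ≤ ∑ l ∈ range (n + 1), G l * ∑ x ∈ C, ∑ y ∈ C, kraw n q l (hammingDist x y) :=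
          single_le_sum (fun l hl => mul_nonneg (hG l hl) (hS l)) (mem_range.2 n.succ_pos)
      _ = ∑ x ∈ C, ∑ y ∈ C, g (hammingDist x y) := by
          simp only [hg, mul_sum]
          rw [sum_comm]
          exact sum_congr rfl fun x _ => sum_comm
  have hup : ∑ x ∈ C, ∑ y ∈ C, g (hammingDist x y) ≤ #C * g 0 :=
    sum_sum_le_card_mul C _ _ (fun x _ => by simp) fun x hx y hy hxy =>
      hgi _ (hC x hx y hy hxy) (hammingDist_le_card_fintype.trans_eq (Fintype.card_fin n))
  rw [le_div_iff₀ hG0]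
  rcases (#C).eq_zero_or_pos with hC0 | hCpos
  · simp [hC0, hg0.le]
  · have : (0 : ℝ) < #C := by exact_mod_cast hCpos
    nlinarith

/-- The classical form of the linear programming bound (Theorem 6 of the paper): if
`g(z) = Σ_{i=0}^n g_i K_i^{(n,q)}(z)` satisfies `g₀ > 0`, `g_i ≥ 0` for `1 ≤ i ≤ n`,
`g(0) > 0` and `g(i) ≤ 0` for integers `d ≤ i ≤ n`, then every code in `H(n,q)` with
minimum distance at least `d` has at most `g(0)/g₀` elements. -/
theorem stmt9 (n q d : ℕ) (hn : 1 ≤ n) (hq : 2 ≤ q) (hd1 : 1 ≤ d) (hdn : d ≤ n)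
    (G : ℕ → ℝ)
    (hG0 : 0 < G 0) (hGi : ∀ i : ℕ, 1 ≤ i → i ≤ n → 0 ≤ G i)
    (hg0 : 0 < ∑ i ∈ Finset.range (n + 1), G i * kraw n q i 0)
    (hgi : ∀ i : ℕ, d ≤ i → i ≤ n →
      (∑ l ∈ Finset.range (n + 1), G l * kraw n q l (i : ℝ)) ≤ 0)
    (C : Finset (Fin n → Fin q))
    (hC : ∀ x ∈ C, ∀ y ∈ C, x ≠ y → d ≤ hammingDist x y) :
    (C.card : ℝ) ≤ (∑ i ∈ Finset.range (n + 1), G i * kraw n q i 0) / G 0 :=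
  stmt9_general n q d hq G hG0 hGi hg0 hgi C hC
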